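/- Let m, l₁ > 0 and g ∈ ℝ. Let q, ω : ℝ → ℝ³ be differentiable with ‖q(t)‖ = 1, q·ω = 0, and q̇ = ω × q for all t, with q twice differentiable, and let u : ℝ → ℝ³ be arbitrary. Define the quadrotor position x = l₁ q and the internal force λ = m ẍ − u − m g e₃ (from Newton's second law m ẍ = u + m g e₃ + λ). Then the tension T := −λ·q satisfies T = m g (q·e₃) + m l₁ ‖ω‖² + q·u for all t. In particular, T depends on u only through its component parallel to q. -/

import Mathlib

noncomputable section

open scoped BigOperators

/-- ℝ³ as `Fin 3 → ℝ`. -/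
abbrev V3 : Type := Fin 3 → ℝ

/-- Euclidean inner product on ℝ³. -/
def dot3 (a b : V3) : ℝ := ∑ i, a i * b i

/-- Euclidean norm on ℝ³. -/
def norm3 (a : V3) : ℝ := Real.sqrt (dot3 a a)

/-- Cross product on ℝ³. -/
def cross3 (a b : V3) : V3 :=
  ![a 1 * b 2 - a 2 * b 1, a 2 * b 0 - a 0 * b 2, a 0 * b 1 - a 1 * b 0]

/-- The third standard basis vector. -/
def e3 : V3 := ![0, 0, 1]

/-! The tether constraint `‖q‖ = 1` is differentiated twice: `q·q̇ = 0` and then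
`q·q̈ = -‖q̇‖²`, while `q̇ = ω × q` with `ω ⊥ q` gives `‖q̇‖ = ‖ω‖` by Lagrange's identity.
Hence the radial component of Newton's law `m l₁ q̈ = u + m g e₃ + λ` reads
`-m l₁ ‖ω‖² = q·u + m g (q·e₃) - T`, which is the tension formula. -/

open Matrix

lemma dot3_eq_dotProduct (a b : V3) : dot3 a b = a ⬝ᵥ b := rfl

lemma norm3_sq (a : V3) : norm3 a ^ 2 = a ⬝ᵥ a :=
  Real.sq_sqrt (Finset.sum_nonneg fun i _ => mul_self_nonneg (a i))

lemma cross3_eq_crossProduct (a b : V3) : cross3 a b = a ⨯₃ b := by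
  rw [cross_apply]; rfl

lemma cross_dot_cross_self_of_dot_eq_zero {w v : V3} (hv : v ⬝ᵥ v = 1) (hwv : v ⬝ᵥ w = 0) :
    w ⨯₃ v ⬝ᵥ w ⨯₃ v = w ⬝ᵥ w := by
  rw [cross_dot_cross, hv, dotProduct_comm w v, hwv]; ring

section Deriv

variable {ι : Type*} [Fintype ι] {f g : ℝ → ι → ℝ} {f' g' : ι → ℝ} {t : ℝ}

theorem HasDerivAt.dotProduct (hf : HasDerivAt f f' t) (hg : HasDerivAt g g' t) :
    HasDerivAt (fun s => f s ⬝ᵥ g s) (f' ⬝ᵥ g t + f t ⬝ᵥ g') t := by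
  have key : HasDerivAt (fun s => ∑ i, f s i * g s i) (∑ i, (f' i * g t i + f t i * g' i)) t :=
    HasDerivAt.fun_sum fun i _ => (hasDerivAt_pi.mp hf i).fun_mul (hasDerivAt_pi.mp hg i)
  rwa [Finset.sum_add_distrib] at key

theorem dotProduct_deriv_add_eq_zero_of_const {c : ℝ} (hf : HasDerivAt f f' t)
    (hg : HasDerivAt g g' t) (hc : ∀ s, f s ⬝ᵥ g s = c) : f' ⬝ᵥ g t + f t ⬝ᵥ g' = 0 := by
  have hconst : (fun s => f s ⬝ᵥ g s) = fun _ => c := funext hc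
  exact (hf.dotProduct hg).unique (hconst ▸ hasDerivAt_const t c)

theorem dotProduct_deriv_deriv_of_dotProduct_self_eq_one {q : ℝ → ι → ℝ}
    (hq : Differentiable ℝ q) (hq' : Differentiable ℝ (deriv q)) (hunit : ∀ s, q s ⬝ᵥ q s = 1)
    (t : ℝ) : q t ⬝ᵥ deriv (deriv q) t = -(deriv q t ⬝ᵥ deriv q t) := by
  have hvel : ∀ s, q s ⬝ᵥ deriv q s = 0 := fun s => by
    have h := dotProduct_deriv_add_eq_zero_of_const (hq s).hasDerivAt (hq s).hasDerivAt hunit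
    rw [dotProduct_comm] at h
    linarith
  have h := dotProduct_deriv_add_eq_zero_of_const (hq t).hasDerivAt (hq' t).hasDerivAt hvel
  linarith

end Deriv

lemma deriv_deriv_const_smul {E : Type*} [NormedAddCommGroup E] [NormedSpace ℝ E] {q : ℝ → E}
    (c : ℝ) (hq : Differentiable ℝ q) (hq' : Differentiable ℝ (deriv q)) (t : ℝ) :
    deriv (deriv fun s => c • q s) t = c • deriv (deriv q) t := by
  have h : deriv (fun s => c • q s) = fun s => c • deriv q s :=
    funext fun s => deriv_fun_const_smul c (hq s)
  rw [h, deriv_fun_const_smul c (hq' t)]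

lemma neg_dotProduct_newton_force (m l1 g : ℝ) (a v q : V3) :
    -((m • (l1 • a) - v - (m * g) • e3) ⬝ᵥ q)
      = m * g * (q ⬝ᵥ e3) - m * l1 * (q ⬝ᵥ a) + q ⬝ᵥ v := by
  rw [dotProduct_comm _ q]
  simp only [dotProduct_sub, dotProduct_smul, smul_eq_mul]
  ring

theorem tension_formula_general (m l1 g : ℝ)
    (q ω : ℝ → V3) (u : ℝ → V3)
    (hq : Differentiable ℝ q)
    (hq' : Differentiable ℝ (deriv q))
    (hunit : ∀ t, norm3 (q t) = 1)
    (hperp : ∀ t, dot3 (q t) (ω t) = 0)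
    (hkin : ∀ t, deriv q t = cross3 (ω t) (q t)) :
    (∀ t : ℝ,
      -dot3 (m • deriv (deriv (fun s => l1 • q s)) t - u t - (m * g) • e3) (q t)
        = m * g * dot3 (q t) e3 + m * l1 * norm3 (ω t) ^ 2 + dot3 (q t) (u t)) ∧
    (∀ u' : ℝ → V3, ∀ t : ℝ, dot3 (q t) (u t) = dot3 (q t) (u' t) →
      -dot3 (m • deriv (deriv (fun s => l1 • q s)) t - u t - (m * g) • e3) (q t)
        = -dot3 (m • deriv (deriv (fun s => l1 • q s)) t - u' t - (m * g) • e3) (q t)) := by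
  have hunit' : ∀ t, q t ⬝ᵥ q t = 1 := fun t => by rw [← norm3_sq, hunit t, one_pow]
  have hradial : ∀ t, q t ⬝ᵥ deriv (deriv q) t = -(ω t ⬝ᵥ ω t) := fun t => by
    rw [dotProduct_deriv_deriv_of_dotProduct_self_eq_one hq hq' hunit' t, hkin t,
      cross3_eq_crossProduct, cross_dot_cross_self_of_dot_eq_zero (hunit' t) (hperp t)]
  have htension : ∀ (t : ℝ) (v : V3),
      -dot3 (m • deriv (deriv (fun s => l1 • q s)) t - v - (m * g) • e3) (q t)
        = m * g * dot3 (q t) e3 + m * l1 * norm3 (ω t) ^ 2 + dot3 (q t) v := fun t v => by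
    simp only [dot3_eq_dotProduct, deriv_deriv_const_smul l1 hq hq' t,
      neg_dotProduct_newton_force, hradial, norm3_sq]
    ring
  refine ⟨fun t => htension t (u t), fun u' t h => ?_⟩
  rw [htension t (u t), htension t (u' t), h]

/-- expression of the tether tension. With quadrotor position
`x = l₁ q`, internal force `λ = m ẍ − u − m g e₃`, the tension `T = −λ·q`
satisfies `T = m g (q·e₃) + m l₁ ‖ω‖² + q·u`; in particular `T` depends on the
thrust `u` only through its component parallel to `q`. -/
theorem tension_formula (m l1 g : ℝ) (hm : 0 < m) (hl1 : 0 < l1)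
    (q ω : ℝ → V3) (u : ℝ → V3)
    (hq : Differentiable ℝ q) (hω : Differentiable ℝ ω)
    (hq' : Differentiable ℝ (deriv q))
    (hunit : ∀ t, norm3 (q t) = 1)
    (hperp : ∀ t, dot3 (q t) (ω t) = 0)
    (hkin : ∀ t, deriv q t = cross3 (ω t) (q t)) :
    (∀ t : ℝ,
      -dot3 (m • deriv (deriv (fun s => l1 • q s)) t - u t - (m * g) • e3) (q t)
        = m * g * dot3 (q t) e3 + m * l1 * norm3 (ω t) ^ 2 + dot3 (q t) (u t)) ∧
    (∀ u' : ℝ → V3, ∀ t : ℝ, dot3 (q t) (u t) = dot3 (q t) (u' t) →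
      -dot3 (m • deriv (deriv (fun s => l1 • q s)) t - u t - (m * g) • e3) (q t)
        = -dot3 (m • deriv (deriv (fun s => l1 • q s)) t - u' t - (m * g) • e3) (q t)) :=
  tension_formula_general m l1 g q ω u hq hq' hunit hperp hkin
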